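/- arXiv:1804.04029 — 6 statements merged into one kernel-verified Lean document; each statement's English description precedes it below -/
import Mathlib

section
/- Let n, m be positive integers, let Γ ∈ ℝ^{(n+m)×(n+m)} be written in block form Γ = [[Γ₁₁, Γ₁₂],[Γ₂₁, Γ₂₂]] with Γ₁₁ ∈ ℝ^{n×n}, Γ₁₂ ∈ ℝ^{n×m}, Γ₂₁ ∈ ℝ^{m×n}, Γ₂₂ ∈ ℝ^{m×m}, and suppose Γ₁₁ = 0. Let Q ∈ ℝ^{m×m} be symmetric positive definite and set D = [[Iₙ, 0],[0, Q]] ∈ ℝ^{(n+m)×(n+m)}. If the matrix Γ·D + D·Γᵀ is positive semidefinite, then Γ₁₂·Q = −Γ₂₁ᵀ. -/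
/-!
When `Γ₁₁ = 0` the upper-left block of `ΓD + DΓᵀ` vanishes. For a positive semidefinite `A`,
`eᵢᴴ A eᵢ = 0` forces `A eᵢ = 0`, so a zero diagonal entry kills its whole row; hence the
upper-right block `Γ₁₂Q + Γ₂₁ᵀ` is zero.
-/

open Matrix
open scoped ComplexOrder

namespace Matrix.PosSemidef

variable {ι 𝕜 : Type*} [Fintype ι] [DecidableEq ι] [RCLike 𝕜] {A : Matrix ι ι 𝕜}

theorem apply_eq_zero_of_diag_eq_zero (hA : A.PosSemidef) {i : ι} (hi : A i i = 0) (j : ι) :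
    A i j = 0 := by
  have hcol : A *ᵥ Pi.single i 1 = 0 :=
    (hA.dotProduct_mulVec_zero_iff _).mp (by simp [mulVec_single, hi])
  have hji : A j i = 0 := by simpa [mulVec_single] using congrFun hcol j
  rw [← hA.isHermitian.apply i j, hji, star_zero]

theorem fromBlocks₁₂_eq_zero {m n : Type*} [Fintype m] [Fintype n] [DecidableEq m]
    [DecidableEq n] {B : Matrix m n 𝕜} {C : Matrix n m 𝕜} {D : Matrix n n 𝕜}
    (h : (fromBlocks 0 B C D).PosSemidef) : B = 0 := by
  ext i j
  simpa using h.apply_eq_zero_of_diag_eq_zero (i := Sum.inl i) (by simp) (Sum.inr j)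

end Matrix.PosSemidef

theorem Matrix.fromBlocks_zero₁₁_mul_diag_add {m n R : Type*} [Fintype m] [Fintype n]
    [DecidableEq m] [DecidableEq n] [CommRing R] (B : Matrix m n R) (C : Matrix n m R)
    (E Q : Matrix n n R) :
    fromBlocks 0 B C E * fromBlocks 1 0 0 Q + fromBlocks 1 0 0 Q * (fromBlocks 0 B C E)ᵀ =
      fromBlocks 0 (B * Q + Cᵀ) (C + Q * Bᵀ) (E * Q + Q * Eᵀ) := by
  simp [fromBlocks_transpose, fromBlocks_multiply, fromBlocks_add]

theorem stmt0_general {n m : ℕ}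
    (Γ11 : Matrix (Fin n) (Fin n) ℝ) (Γ12 : Matrix (Fin n) (Fin m) ℝ)
    (Γ21 : Matrix (Fin m) (Fin n) ℝ) (Γ22 : Matrix (Fin m) (Fin m) ℝ)
    (hΓ11 : Γ11 = 0)
    (Q : Matrix (Fin m) (Fin m) ℝ)
    (Γ : Matrix (Fin n ⊕ Fin m) (Fin n ⊕ Fin m) ℝ)
    (hΓ : Γ = Matrix.fromBlocks Γ11 Γ12 Γ21 Γ22)
    (D : Matrix (Fin n ⊕ Fin m) (Fin n ⊕ Fin m) ℝ)
    (hD : D = Matrix.fromBlocks 1 0 0 Q)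
    (hpsd : (Γ * D + D * Γᵀ).PosSemidef) :
    Γ12 * Q = -Γ21ᵀ := by
  subst hΓ hD hΓ11
  rw [fromBlocks_zero₁₁_mul_diag_add] at hpsd
  exact eq_neg_of_add_eq_zero_left hpsd.fromBlocks₁₂_eq_zero

/-- For a quasi-Markovian GLE without white-noise component (`Γ₁₁ = 0`), positive
semidefiniteness of `Γ·D + D·Γᵀ` with `D = diag(Iₙ, Q)` forces `Γ₁₂·Q = −Γ₂₁ᵀ`. -/
theorem stmt0 {n m : ℕ} (hn : 0 < n) (hm : 0 < m)
    (Γ11 : Matrix (Fin n) (Fin n) ℝ) (Γ12 : Matrix (Fin n) (Fin m) ℝ)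
    (Γ21 : Matrix (Fin m) (Fin n) ℝ) (Γ22 : Matrix (Fin m) (Fin m) ℝ)
    (hΓ11 : Γ11 = 0)
    (Q : Matrix (Fin m) (Fin m) ℝ) (hQ : Q.PosDef)
    (Γ : Matrix (Fin n ⊕ Fin m) (Fin n ⊕ Fin m) ℝ)
    (hΓ : Γ = Matrix.fromBlocks Γ11 Γ12 Γ21 Γ22)
    (D : Matrix (Fin n ⊕ Fin m) (Fin n ⊕ Fin m) ℝ)
    (hD : D = Matrix.fromBlocks 1 0 0 Q)
    (hpsd : (Γ * D + D * Γᵀ).PosSemidef) :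
    Γ12 * Q = -Γ21ᵀ :=
  stmt0_general Γ11 Γ12 Γ21 Γ22 hΓ11 Q Γ hΓ D hD hpsd
end

section
/- Let n, m be positive integers, β > 0, M ∈ ℝ^{n×n} symmetric positive definite, U : ℝⁿ → ℝ twice continuously differentiable, and let Γ : ℝⁿ → ℝ^{(n+m)×(n+m)} and Σ : ℝⁿ → ℝ^{(n+m)×(n+m)} be continuously differentiable matrix-valued maps, with blocks Γ₁₁(q) ∈ ℝ^{n×n}, Γ₁₂(q) ∈ ℝ^{n×m}, Γ₂₁(q) ∈ ℝ^{m×n}, Γ₂₂(q) ∈ ℝ^{m×m}. Suppose there is a symmetric positive definite Q ∈ ℝ^{m×m} such that for every q ∈ ℝⁿ: Γ(q)·diag(Iₙ, Q) + diag(Iₙ, Q)·Γ(q)ᵀ = Σ(q)Σ(q)ᵀ. Define ρ(q,p,s) = exp(−β(U(q) + ½ pᵀM⁻¹p + ½ sᵀQ⁻¹s)). Then ρ satisfies the stationary Fokker–Planck equation of the quasi-Markovian generalized Langevin equation pointwise: for all (q,p,s) ∈ ℝⁿ×ℝⁿ×ℝᵐ, ⟨M⁻¹p, ∇_q ρ⟩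 + div_p[(−∇U(q) − Γ₁₁(q)M⁻¹p − Γ₁₂(q)s)·ρ] + div_s[(−Γ₂₁(q)M⁻¹p − Γ₂₂(q)s)·ρ] = (1/(2β)) ∑_{i,j=1}^{n+m} (Σ(q)Σ(q)ᵀ)_{ij} ∂²ρ/∂z_i∂z_j, where z = (p,s) ∈ ℝ^{n+m} and div_p, div_s denote the divergence in the p- and s-variables respectively. -/
open Matrix

/-- The coordinate direction in the `q`-variable. -/
noncomputable def eQ (n m : ℕ) (i : Fin n) : (Fin n → ℝ) × (Fin n → ℝ) × (Fin m → ℝ) :=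
  (Pi.single i 1, 0, 0)

/-- The coordinate direction in the `p`-variable. -/
noncomputable def eP (n m : ℕ) (i : Fin n) : (Fin n → ℝ) × (Fin n → ℝ) × (Fin m → ℝ) :=
  (0, Pi.single i 1, 0)

/-- The coordinate direction in the `s`-variable. -/
noncomputable def eS (n m : ℕ) (j : Fin m) : (Fin n → ℝ) × (Fin n → ℝ) × (Fin m → ℝ) :=
  (0, 0, Pi.single j 1)

/-- The coordinate direction in the `z = (p,s)`-variable. -/
noncomputable def eZ (n m : ℕ) : Fin (n + m) → (Fin n → ℝ) × (Fin n → ℝ) × (Fin m → ℝ) :=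
  Fin.addCases (eP n m) (eS n m)

/-- The Gibbs-type density `ρ(q,p,s) = exp(−β(U(q) + ½ pᵀM⁻¹p + ½ sᵀQ⁻¹s))`. -/
noncomputable def gleDensity {n m : ℕ} (β : ℝ) (U : (Fin n → ℝ) → ℝ)
    (M : Matrix (Fin n) (Fin n) ℝ) (Q : Matrix (Fin m) (Fin m) ℝ)
    (x : (Fin n → ℝ) × (Fin n → ℝ) × (Fin m → ℝ)) : ℝ :=
  Real.exp (-β * (U x.1 + (1 / 2) * (x.2.1 ⬝ᵥ M⁻¹.mulVec x.2.1)
    + (1 / 2) * (x.2.2 ⬝ᵥ Q⁻¹.mulVec x.2.2)))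

/-!
Write `ρ = exp (-β H)` with `H = U(q) + ½ pᵀM⁻¹p + ½ sᵀQ⁻¹s`, let `v = ∇_z H = (M⁻¹p, Q⁻¹s)`,
`D = diag(M⁻¹, Q⁻¹)` and `J = diag(I, Q)`. Then `∂_{z_a} ∂_{z_b} ρ = ρ (β² v_a v_b - β D_ab)`, and
since `ΣΣᵀ = ΓJ + (ΓJ)ᵀ` with `J`, `D` symmetric, the diffusion term equals
`ρ (β vᵀΓJv - tr (ΓJD))`. On the other side the Hamiltonian contributions
`⟨M⁻¹p, ∇_q ρ⟩ - ⟨∇U, ∂_p ρ⟩` cancel, and the friction terms give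
`ρ (β (M⁻¹p, Q⁻¹s)ᵀ Γ (M⁻¹p, s) - tr (Γ₁₁M⁻¹) - tr Γ₂₂)`, which is the same quantity because
`Jv = (M⁻¹p, s)` and `JD = diag(M⁻¹, I)`.
-/

section LinearAlgebra

variable {R ι κ : Type*} [CommRing R] [Fintype ι] [Fintype κ]

theorem Matrix.IsSymm.dotProduct_mulVec_comm {A : Matrix ι ι R} (hA : A.IsSymm) (a b : ι → R) :
    a ⬝ᵥ A *ᵥ b = A *ᵥ a ⬝ᵥ b := by
  rw [Matrix.dotProduct_mulVec, ← mulVec_transpose, hA.eq]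

theorem submatrix_mul_add_mul_transpose_submatrix (A J : Matrix ι ι R) (hJ : J.IsSymm)
    (e : κ ≃ ι) :
    A.submatrix e e * J.submatrix e e + J.submatrix e e * (A.submatrix e e)ᵀ =
      (A * J + (A * J)ᵀ).submatrix e e := by
  rw [transpose_submatrix, submatrix_mul_equiv, submatrix_mul_equiv, transpose_mul, hJ.eq]
  rfl

theorem sumElim_dotProduct_fromBlocks_mul_mulVec [DecidableEq ι] (A : Matrix ι ι R)
    (B : Matrix ι κ R) (C : Matrix κ ι R) (D Q : Matrix κ κ R) (u : ι → R) (w w' : κ → R) :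
    Sum.elim u w ⬝ᵥ (fromBlocks A B C D * fromBlocks 1 0 0 Q) *ᵥ Sum.elim u w' =
      u ⬝ᵥ (A *ᵥ u + B *ᵥ (Q *ᵥ w')) + w ⬝ᵥ (C *ᵥ u + D *ᵥ (Q *ᵥ w')) := by
  rw [← mulVec_mulVec, fromBlocks_mulVec, fromBlocks_mulVec, sumElim_dotProduct_sumElim]
  simp

theorem trace_fromBlocks_mul_fromBlocks_mul_fromBlocks [DecidableEq ι] (A P : Matrix ι ι R)
    (B : Matrix ι κ R) (C : Matrix κ ι R) (D Q P' : Matrix κ κ R) :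
    trace (fromBlocks A B C D * fromBlocks 1 0 0 Q * fromBlocks P 0 0 P') =
      trace (A * P) + trace (D * (Q * P')) := by
  simp [fromBlocks_multiply, trace, Fintype.sum_sum_type, Matrix.mul_assoc]

end LinearAlgebra

theorem sum_add_transpose_mul_hessian {ι : Type*} [Fintype ι] (B D : Matrix ι ι ℝ)
    (hD : D.IsSymm) (v : ι → ℝ) (c d : ℝ) :
    ∑ a, ∑ b, (B + Bᵀ : Matrix ι ι ℝ) a b * (c * v a * v b - d * D b a) =
      2 * (c * (v ⬝ᵥ B *ᵥ v) - d * trace (B * D)) := by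
  have hswap : ∑ a, ∑ b, Bᵀ a b * (c * v a * v b - d * D b a) =
      ∑ a, ∑ b, B a b * (c * v a * v b - d * D b a) := by
    rw [Finset.sum_comm]
    refine Finset.sum_congr rfl fun a _ => Finset.sum_congr rfl fun b _ => ?_
    rw [transpose_apply, hD.apply a b]
    ring
  calc ∑ a, ∑ b, (B + Bᵀ : Matrix ι ι ℝ) a b * (c * v a * v b - d * D b a)
      = 2 * ∑ a, ∑ b, B a b * (c * v a * v b - d * D b a) := by
        simp only [Matrix.add_apply, add_mul, Finset.sum_add_distrib, hswap]
        ring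
    _ = 2 * ∑ a, ∑ b, (c * (v a * (B a b * v b)) - d * (B a b * D b a)) := by
        congr 1
        exact Finset.sum_congr rfl fun a _ => Finset.sum_congr rfl fun b _ => by ring
    _ = 2 * (c * (v ⬝ᵥ B *ᵥ v) - d * trace (B * D)) := by
        simp only [dotProduct, mulVec, trace, diag, mul_apply, Finset.sum_sub_distrib,
          ← Finset.mul_sum]

theorem sum_transport_terms_eq {n m : ℕ} (β ρ : ℝ) (u g : Fin n → ℝ) (w s : Fin m → ℝ)
    (A G11 : Matrix (Fin n) (Fin n) ℝ) (G12 : Matrix (Fin n) (Fin m) ℝ)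
    (G21 : Matrix (Fin m) (Fin n) ℝ) (G22 : Matrix (Fin m) (Fin m) ℝ) :
    ∑ i, u i * (-β * ρ * g i)
        + ∑ i, (-A.diag i * ρ + (-g i - (G11 *ᵥ u) i - (G12 *ᵥ s) i) * (-β * ρ * u i))
        + ∑ j, (-G22.diag j * ρ + (-(G21 *ᵥ u) j - (G22 *ᵥ s) j) * (-β * ρ * w j)) =
      ρ * (β * (u ⬝ᵥ (G11 *ᵥ u + G12 *ᵥ s) + w ⬝ᵥ (G21 *ᵥ u + G22 *ᵥ s))
        - (trace A + trace G22)) := by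
  calc _ = ∑ i, ρ * (β * (u i * (G11 *ᵥ u + G12 *ᵥ s) i) - A.diag i)
        + ∑ j, ρ * (β * (w j * (G21 *ᵥ u + G22 *ᵥ s) j) - G22.diag j) := by
        rw [← Finset.sum_add_distrib]
        congr 1
        · exact Finset.sum_congr rfl fun i _ => by simp only [Pi.add_apply]; ring
        · exact Finset.sum_congr rfl fun j _ => by simp only [Pi.add_apply]; ring
    _ = _ := by
        simp only [dotProduct, trace, mul_sub, Finset.sum_sub_distrib, ← Finset.mul_sum]
        ring

section Calculus

variable {E F G : Type*} [NormedAddCommGroup E] [NormedSpace ℝ E] [NormedAddCommGroup F]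
  [NormedSpace ℝ F] [NormedAddCommGroup G] [NormedSpace ℝ G] {ι κ : Type*} [Fintype ι]

theorem HasFDerivAt.mulVec [Fintype κ] {f : E → ι → ℝ} {f' : E →L[ℝ] ι → ℝ} {x : E}
    (A : Matrix κ ι ℝ) (hf : HasFDerivAt f f' x) :
    HasFDerivAt (fun y => A *ᵥ f y) ((LinearMap.toContinuousLinearMap A.mulVecLin).comp f') x := by
  exact (LinearMap.toContinuousLinearMap A.mulVecLin).hasFDerivAt.comp x hf

@[fun_prop]
theorem DifferentiableAt.mulVec [Fintype κ] {f : E → ι → ℝ} {x : E} (A : Matrix κ ι ℝ)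
    (hf : DifferentiableAt ℝ f x) : DifferentiableAt ℝ (fun y => A *ᵥ f y) x :=
  (hf.hasFDerivAt.mulVec A).differentiableAt

@[fun_prop]
theorem DifferentiableAt.dotProduct {f g : E → ι → ℝ} {x : E} (hf : DifferentiableAt ℝ f x)
    (hg : DifferentiableAt ℝ g x) : DifferentiableAt ℝ (fun y => f y ⬝ᵥ g y) x := by
  simp only [_root_.dotProduct]
  fun_prop

theorem fderiv_mulVec [Fintype κ] {f : E → ι → ℝ} {x : E} (A : Matrix κ ι ℝ)
    (hf : DifferentiableAt ℝ f x) (v : E) :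
    fderiv ℝ (fun y => A *ᵥ f y) x v = A *ᵥ fderiv ℝ f x v := by
  rw [(hf.hasFDerivAt.mulVec A).fderiv]
  rfl

theorem fderiv_dotProduct {f g : E → ι → ℝ} {x : E} (hf : DifferentiableAt ℝ f x)
    (hg : DifferentiableAt ℝ g x) (v : E) :
    fderiv ℝ (fun y => f y ⬝ᵥ g y) x v = fderiv ℝ f x v ⬝ᵥ g x + f x ⬝ᵥ fderiv ℝ g x v := by
  simp only [_root_.dotProduct]
  simp (disch := fun_prop) [fderiv_fun_mul, fderiv_fun_sum, fderiv_apply, Finset.sum_add_distrib]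
  rw [add_comm]
  simp only [mul_comm]

theorem fderiv_comp_fst_apply {g : F → ℝ} {x : F × G} (hg : DifferentiableAt ℝ g x.1)
    (v : F × G) : fderiv ℝ (fun y => g y.1) x v = fderiv ℝ g x.1 v.1 := by
  show fderiv ℝ (g ∘ Prod.fst) x v = _
  rw [(hg.hasFDerivAt.comp x hasFDerivAt_fst).fderiv]
  rfl

theorem differentiableAt_mulVec_comp_fst_apply {A : F → Matrix κ ι ℝ} {f : F × G → ι → ℝ}
    {x : F × G} (hA : ∀ i k, DifferentiableAt ℝ (fun q => A q i k) x.1)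
    (hf : DifferentiableAt ℝ f x) (i : κ) :
    DifferentiableAt ℝ (fun y => (A y.1 *ᵥ f y) i) x := by
  have hA' : ∀ k, DifferentiableAt ℝ (fun y : F × G => A y.1 i k) x := fun k =>
    (hA i k).comp x differentiableAt_fst
  simp only [mulVec, dotProduct]
  fun_prop

theorem fderiv_mulVec_comp_fst_apply {A : F → Matrix κ ι ℝ} {f : F × G → ι → ℝ} {x : F × G}
    (hA : ∀ i k, DifferentiableAt ℝ (fun q => A q i k) x.1) (hf : DifferentiableAt ℝ f x)
    {v : F × G} (hv : v.1 = 0) (i : κ) :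
    fderiv ℝ (fun y => (A y.1 *ᵥ f y) i) x v = (A x.1 *ᵥ fderiv ℝ f x v) i := by
  have hA' : ∀ k, DifferentiableAt ℝ (fun y : F × G => A y.1 i k) x := fun k =>
    (hA i k).comp x differentiableAt_fst
  simp only [mulVec, dotProduct]
  rw [fderiv_fun_sum fun k _ => by fun_prop, _root_.sum_apply]
  refine Finset.sum_congr rfl fun k _ => ?_
  rw [fderiv_fun_mul (hA' k) (by fun_prop)]
  simp [fderiv_comp_fst_apply (hA i k), hv, fderiv_apply hf]

end Calculus

section GLE

variable {n m : ℕ} {β : ℝ} {U : (Fin n → ℝ) → ℝ} {M : Matrix (Fin n) (Fin n) ℝ}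
  {Q : Matrix (Fin m) (Fin m) ℝ}

/-- `∇_z H` for the energy `H = U(q) + ½ pᵀM⁻¹p + ½ sᵀQ⁻¹s`, with `z = (p, s)` indexed by
`Fin n ⊕ Fin m`. -/
noncomputable def gleGradZ (M : Matrix (Fin n) (Fin n) ℝ) (Q : Matrix (Fin m) (Fin m) ℝ)
    (x : (Fin n → ℝ) × (Fin n → ℝ) × (Fin m → ℝ)) : Fin n ⊕ Fin m → ℝ :=
  Sum.elim (M⁻¹ *ᵥ x.2.1) (Q⁻¹ *ᵥ x.2.2)

@[simp] theorem eZ_castAdd (i : Fin n) : eZ n m (Fin.castAdd m i) = eP n m i := by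
  simp [eZ]

@[simp] theorem eZ_natAdd (j : Fin m) : eZ n m (Fin.natAdd n j) = eS n m j := by
  simp [eZ]

theorem differentiable_gleDensity (hU : Differentiable ℝ U) :
    Differentiable ℝ (gleDensity β U M Q) := by
  intro x
  unfold gleDensity
  fun_prop

theorem fderiv_gleDensity_apply (hU : Differentiable ℝ U) (hM : M⁻¹.IsSymm) (hQ : Q⁻¹.IsSymm)
    (x v : (Fin n → ℝ) × (Fin n → ℝ) × (Fin m → ℝ)) :
    fderiv ℝ (gleDensity β U M Q) x v = -β * gleDensity β U M Q x *
      (fderiv ℝ U x.1 v.1 + M⁻¹ *ᵥ x.2.1 ⬝ᵥ v.2.1 + Q⁻¹ *ᵥ x.2.2 ⬝ᵥ v.2.2) := by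
  unfold gleDensity
  rw [fderiv_exp (by fun_prop)]
  simp (disch := fun_prop) [fderiv_dotProduct, fderiv_mulVec, fderiv_comp_fst_apply, fderiv.fst,
    fderiv.snd, fderiv_const_mul, fderiv_fun_add]
  rw [hM.dotProduct_mulVec_comm x.2.1 v.2.1, dotProduct_comm v.2.1,
    hQ.dotProduct_mulVec_comm x.2.2 v.2.2, dotProduct_comm v.2.2]
  ring

theorem fderiv_gleDensity_eQ (hU : Differentiable ℝ U) (hM : M⁻¹.IsSymm) (hQ : Q⁻¹.IsSymm)
    (x : (Fin n → ℝ) × (Fin n → ℝ) × (Fin m → ℝ)) (i : Fin n) :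
    fderiv ℝ (gleDensity β U M Q) x (eQ n m i) =
      -β * gleDensity β U M Q x * fderiv ℝ U x.1 (Pi.single i 1) := by
  simp [fderiv_gleDensity_apply hU hM hQ, eQ]

theorem fderiv_gleDensity_eP (hU : Differentiable ℝ U) (hM : M⁻¹.IsSymm) (hQ : Q⁻¹.IsSymm)
    (x : (Fin n → ℝ) × (Fin n → ℝ) × (Fin m → ℝ)) (i : Fin n) :
    fderiv ℝ (gleDensity β U M Q) x (eP n m i) =
      -β * gleDensity β U M Q x * (M⁻¹ *ᵥ x.2.1) i := by
  simp [fderiv_gleDensity_apply hU hM hQ, eP]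

theorem fderiv_gleDensity_eS (hU : Differentiable ℝ U) (hM : M⁻¹.IsSymm) (hQ : Q⁻¹.IsSymm)
    (x : (Fin n → ℝ) × (Fin n → ℝ) × (Fin m → ℝ)) (j : Fin m) :
    fderiv ℝ (gleDensity β U M Q) x (eS n m j) =
      -β * gleDensity β U M Q x * (Q⁻¹ *ᵥ x.2.2) j := by
  simp [fderiv_gleDensity_apply hU hM hQ, eS]

theorem fderiv_gleDensity_eZ (hU : Differentiable ℝ U) (hM : M⁻¹.IsSymm) (hQ : Q⁻¹.IsSymm)
    (x : (Fin n → ℝ) × (Fin n → ℝ) × (Fin m → ℝ)) (a : Fin n ⊕ Fin m) :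
    fderiv ℝ (gleDensity β U M Q) x (eZ n m (finSumFinEquiv a)) =
      -β * gleDensity β U M Q x * gleGradZ M Q x a := by
  rcases a with i | j
  · simp [fderiv_gleDensity_eP hU hM hQ, gleGradZ]
  · simp [fderiv_gleDensity_eS hU hM hQ, gleGradZ]

theorem fderiv_fderiv_gleDensity_eZ (hU : Differentiable ℝ U) (hM : M⁻¹.IsSymm)
    (hQ : Q⁻¹.IsSymm) (x : (Fin n → ℝ) × (Fin n → ℝ) × (Fin m → ℝ)) (a b : Fin n ⊕ Fin m) :
    fderiv ℝ (fun y => fderiv ℝ (gleDensity β U M Q) y (eZ n m (finSumFinEquiv b))) x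
        (eZ n m (finSumFinEquiv a)) =
      β ^ 2 * gleDensity β U M Q x * gleGradZ M Q x a * gleGradZ M Q x b
        - β * gleDensity β U M Q x * fromBlocks M⁻¹ 0 0 Q⁻¹ b a := by
  simp only [fderiv_gleDensity_eZ hU hM hQ]
  have hρ := differentiable_gleDensity (β := β) (M := M) (Q := Q) hU
  rcases a with i | i <;> rcases b with j | j <;>
    simp (disch := fun_prop) [gleGradZ, fderiv_fun_mul, fderiv_apply, fderiv_mulVec,
      fderiv.fst, fderiv.snd, fderiv_gleDensity_eP hU hM hQ, fderiv_gleDensity_eS hU hM hQ] <;>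
    simp [eP, eS] <;> ring

theorem fderiv_pDrift_mul_gleDensity_eP (hU : ContDiff ℝ 2 U) (hM : M⁻¹.IsSymm)
    (hQ : Q⁻¹.IsSymm) {Γ11 : (Fin n → ℝ) → Matrix (Fin n) (Fin n) ℝ}
    {Γ12 : (Fin n → ℝ) → Matrix (Fin n) (Fin m) ℝ}
    (hΓ11 : ∀ i k, Differentiable ℝ fun q => Γ11 q i k)
    (hΓ12 : ∀ i k, Differentiable ℝ fun q => Γ12 q i k)
    (x : (Fin n → ℝ) × (Fin n → ℝ) × (Fin m → ℝ)) (i : Fin n) :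
    fderiv ℝ (fun y => (-(fderiv ℝ U y.1 (Pi.single i 1)) - (Γ11 y.1 *ᵥ M⁻¹ *ᵥ y.2.1) i
        - (Γ12 y.1 *ᵥ y.2.2) i) * gleDensity β U M Q y) x (eP n m i) =
      -(Γ11 x.1 * M⁻¹).diag i * gleDensity β U M Q x
        + (-(fderiv ℝ U x.1 (Pi.single i 1)) - (Γ11 x.1 *ᵥ M⁻¹ *ᵥ x.2.1) i
          - (Γ12 x.1 *ᵥ x.2.2) i) * (-β * gleDensity β U M Q x * (M⁻¹ *ᵥ x.2.1) i) := by
  have hU1 : Differentiable ℝ U := hU.differentiable (by norm_num)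
  have hdU : Differentiable ℝ (fderiv ℝ U) :=
    (hU.fderiv_right (by norm_num)).differentiable one_ne_zero
  have h1 : DifferentiableAt ℝ (fun y : (Fin n → ℝ) × (Fin n → ℝ) × (Fin m → ℝ) =>
      -(fderiv ℝ U y.1 (Pi.single i 1))) x := by fun_prop
  have h2 := differentiableAt_mulVec_comp_fst_apply (fun i k => (hΓ11 i k).differentiableAt)
    (x := x) (f := fun y => M⁻¹ *ᵥ y.2.1) (by fun_prop) i
  have h3 := differentiableAt_mulVec_comp_fst_apply (fun i k => (hΓ12 i k).differentiableAt)
    (x := x) (f := fun y => y.2.2) (by fun_prop) i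
  have hv : (eP n m i).1 = 0 := rfl
  rw [fderiv_fun_mul ((h1.fun_sub h2).fun_sub h3) (differentiable_gleDensity hU1 x),
    fderiv_fun_sub (h1.fun_sub h2) h3, fderiv_fun_sub h1 h2, fderiv_fun_neg]
  simp only [_root_.add_apply, _root_.smul_apply, _root_.sub_apply, _root_.neg_apply]
  rw [fderiv_gleDensity_eP hU1 hM hQ,
    fderiv_comp_fst_apply (g := fun q => fderiv ℝ U q (Pi.single i 1)) (by fun_prop),
    fderiv_mulVec_comp_fst_apply (fun i k => (hΓ11 i k).differentiableAt) (by fun_prop) hv,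
    fderiv_mulVec_comp_fst_apply (fun i k => (hΓ12 i k).differentiableAt) (by fun_prop) hv]
  simp (disch := fun_prop) [fderiv_mulVec, fderiv.fst, fderiv.snd, eP]
  simp only [mulVec, dotProduct, mul_apply, col_apply]
  ring

theorem fderiv_sDrift_mul_gleDensity_eS (hU : Differentiable ℝ U) (hM : M⁻¹.IsSymm)
    (hQ : Q⁻¹.IsSymm) {Γ21 : (Fin n → ℝ) → Matrix (Fin m) (Fin n) ℝ}
    {Γ22 : (Fin n → ℝ) → Matrix (Fin m) (Fin m) ℝ}
    (hΓ21 : ∀ j k, Differentiable ℝ fun q => Γ21 q j k)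
    (hΓ22 : ∀ j k, Differentiable ℝ fun q => Γ22 q j k)
    (x : (Fin n → ℝ) × (Fin n → ℝ) × (Fin m → ℝ)) (j : Fin m) :
    fderiv ℝ (fun y => (-(Γ21 y.1 *ᵥ M⁻¹ *ᵥ y.2.1) j - (Γ22 y.1 *ᵥ y.2.2) j)
        * gleDensity β U M Q y) x (eS n m j) =
      -(Γ22 x.1).diag j * gleDensity β U M Q x
        + (-(Γ21 x.1 *ᵥ M⁻¹ *ᵥ x.2.1) j - (Γ22 x.1 *ᵥ x.2.2) j)
          * (-β * gleDensity β U M Q x * (Q⁻¹ *ᵥ x.2.2) j) := by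
  have h1 := differentiableAt_mulVec_comp_fst_apply (fun i k => (hΓ21 i k).differentiableAt)
    (x := x) (f := fun y => M⁻¹ *ᵥ y.2.1) (by fun_prop) j
  have h2 := differentiableAt_mulVec_comp_fst_apply (fun i k => (hΓ22 i k).differentiableAt)
    (x := x) (f := fun y => y.2.2) (by fun_prop) j
  have hv : (eS n m j).1 = 0 := rfl
  rw [fderiv_fun_mul (h1.fun_neg.fun_sub h2) (differentiable_gleDensity hU x),
    fderiv_fun_sub h1.fun_neg h2, fderiv_fun_neg]
  simp only [_root_.add_apply, _root_.smul_apply, _root_.sub_apply, _root_.neg_apply]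
  rw [fderiv_gleDensity_eS hU hM hQ,
    fderiv_mulVec_comp_fst_apply (fun i k => (hΓ21 i k).differentiableAt) (by fun_prop) hv,
    fderiv_mulVec_comp_fst_apply (fun i k => (hΓ22 i k).differentiableAt) (by fun_prop) hv]
  simp (disch := fun_prop) [fderiv_mulVec, fderiv.fst, fderiv.snd, eS]
  ring

end GLE

theorem stmt1_general {n m : ℕ} (β : ℝ) (hβ : 0 < β)
    (M : Matrix (Fin n) (Fin n) ℝ) (hM : M.PosDef)
    (U : (Fin n → ℝ) → ℝ) (hU : ContDiff ℝ 2 U)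
    (Γ Sig : (Fin n → ℝ) → Matrix (Fin (n + m)) (Fin (n + m)) ℝ)
    (hΓ : ∀ i j, ContDiff ℝ 1 (fun q => Γ q i j))
    (Γ11 : (Fin n → ℝ) → Matrix (Fin n) (Fin n) ℝ)
    (Γ12 : (Fin n → ℝ) → Matrix (Fin n) (Fin m) ℝ)
    (Γ21 : (Fin n → ℝ) → Matrix (Fin m) (Fin n) ℝ)
    (Γ22 : (Fin n → ℝ) → Matrix (Fin m) (Fin m) ℝ)
    (hblocks : ∀ q, Γ q =
      (Matrix.fromBlocks (Γ11 q) (Γ12 q) (Γ21 q) (Γ22 q)).submatrix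
        finSumFinEquiv.symm finSumFinEquiv.symm)
    (Q : Matrix (Fin m) (Fin m) ℝ) (hQ : Q.PosDef)
    (hFDR : ∀ q,
      Γ q * (Matrix.fromBlocks 1 0 0 Q).submatrix finSumFinEquiv.symm finSumFinEquiv.symm
        + (Matrix.fromBlocks 1 0 0 Q).submatrix finSumFinEquiv.symm finSumFinEquiv.symm
          * (Γ q)ᵀ
      = Sig q * (Sig q)ᵀ) :
    ∀ x : (Fin n → ℝ) × (Fin n → ℝ) × (Fin m → ℝ),
      -- ⟨M⁻¹p, ∇_q ρ⟩
      (∑ i, M⁻¹.mulVec x.2.1 i * fderiv ℝ (gleDensity β U M Q) x (eQ n m i))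
      -- div_p [ (−∇U(q) − Γ₁₁(q)M⁻¹p − Γ₁₂(q)s) ρ ]
      + (∑ i, fderiv ℝ
          (fun y => (-(fderiv ℝ U y.1 (Pi.single i 1))
            - (Γ11 y.1).mulVec (M⁻¹.mulVec y.2.1) i
            - (Γ12 y.1).mulVec y.2.2 i) * gleDensity β U M Q y) x (eP n m i))
      -- div_s [ (−Γ₂₁(q)M⁻¹p − Γ₂₂(q)s) ρ ]
      + (∑ j, fderiv ℝ
          (fun y => (-((Γ21 y.1).mulVec (M⁻¹.mulVec y.2.1) j)
            - (Γ22 y.1).mulVec y.2.2 j) * gleDensity β U M Q y) x (eS n m j))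
      = (1 / (2 * β)) * ∑ i, ∑ j, (Sig x.1 * (Sig x.1)ᵀ) i j
          * fderiv ℝ (fun y => fderiv ℝ (gleDensity β U M Q) y (eZ n m j)) x (eZ n m i) := by
  intro x
  have hU1 : Differentiable ℝ U := hU.differentiable (by norm_num)
  have hMs : M⁻¹.IsSymm := isHermitian_iff_isSymm.mp hM.isHermitian.inv
  have hQs : Q⁻¹.IsSymm := isHermitian_iff_isSymm.mp hQ.isHermitian.inv
  have hQQ : Q * Q⁻¹ = 1 := mul_nonsing_inv Q ((isUnit_iff_isUnit_det Q).mp hQ.isUnit)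
  have hblock : ∀ a b, Differentiable ℝ fun q => fromBlocks (Γ11 q) (Γ12 q) (Γ21 q) (Γ22 q) a b :=
    fun a b => by
      simpa [hblocks] using (hΓ (finSumFinEquiv a) (finSumFinEquiv b)).differentiable one_ne_zero
  set B := fromBlocks (Γ11 x.1) (Γ12 x.1) (Γ21 x.1) (Γ22 x.1) * fromBlocks 1 0 0 Q with hB
  have hdiff :
      Sig x.1 * (Sig x.1)ᵀ = (B + Bᵀ).submatrix finSumFinEquiv.symm finSumFinEquiv.symm := by
    rw [← hFDR x.1, hblocks x.1, submatrix_mul_add_mul_transpose_submatrix]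
    exact IsSymm.fromBlocks isSymm_one (by simp) (isHermitian_iff_isSymm.mp hQ.isHermitian)
  simp only [fderiv_gleDensity_eQ hU1 hMs hQs,
    fderiv_pDrift_mul_gleDensity_eP hU hMs hQs (Γ11 := Γ11) (Γ12 := Γ12)
      (fun i k => hblock (.inl i) (.inl k)) (fun i k => hblock (.inl i) (.inr k)),
    fderiv_sDrift_mul_gleDensity_eS hU1 hMs hQs (Γ21 := Γ21) (Γ22 := Γ22)
      (fun j k => hblock (.inr j) (.inl k)) (fun j k => hblock (.inr j) (.inr k)),
    ← finSumFinEquiv.sum_comp, fderiv_fderiv_gleDensity_eZ hU1 hMs hQs, hdiff, submatrix_apply,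
    Equiv.symm_apply_apply]
  rw [sum_add_transpose_mul_hessian B _ (hMs.fromBlocks (by simp) hQs),
    sum_transport_terms_eq β _ (M⁻¹ *ᵥ x.2.1) (fun i => fderiv ℝ U x.1 (Pi.single i 1))
      (Q⁻¹ *ᵥ x.2.2) x.2.2,
    hB, gleGradZ, sumElim_dotProduct_fromBlocks_mul_mulVec,
    trace_fromBlocks_mul_fromBlocks_mul_fromBlocks, mulVec_mulVec _ Q, hQQ, one_mulVec,
    Matrix.mul_one]
  field_simp

/-- Under the fluctuation–dissipation relation, the Gibbs-type density
`ρ ∝ exp(−β(U(q) + ½pᵀM⁻¹p + ½sᵀQ⁻¹s))` solves the stationary Fokker–Planck equation of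
the quasi-Markovian generalized Langevin equation pointwise. -/
theorem stmt1 {n m : ℕ} (hn : 0 < n) (hm : 0 < m) (β : ℝ) (hβ : 0 < β)
    (M : Matrix (Fin n) (Fin n) ℝ) (hM : M.PosDef)
    (U : (Fin n → ℝ) → ℝ) (hU : ContDiff ℝ 2 U)
    (Γ Sig : (Fin n → ℝ) → Matrix (Fin (n + m)) (Fin (n + m)) ℝ)
    (hΓ : ∀ i j, ContDiff ℝ 1 (fun q => Γ q i j))
    (hSig : ∀ i j, ContDiff ℝ 1 (fun q => Sig q i j))
    (Γ11 : (Fin n → ℝ) → Matrix (Fin n) (Fin n) ℝ)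
    (Γ12 : (Fin n → ℝ) → Matrix (Fin n) (Fin m) ℝ)
    (Γ21 : (Fin n → ℝ) → Matrix (Fin m) (Fin n) ℝ)
    (Γ22 : (Fin n → ℝ) → Matrix (Fin m) (Fin m) ℝ)
    (hblocks : ∀ q, Γ q =
      (Matrix.fromBlocks (Γ11 q) (Γ12 q) (Γ21 q) (Γ22 q)).submatrix
        finSumFinEquiv.symm finSumFinEquiv.symm)
    (Q : Matrix (Fin m) (Fin m) ℝ) (hQ : Q.PosDef)
    (hFDR : ∀ q,
      Γ q * (Matrix.fromBlocks 1 0 0 Q).submatrix finSumFinEquiv.symm finSumFinEquiv.symm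
        + (Matrix.fromBlocks 1 0 0 Q).submatrix finSumFinEquiv.symm finSumFinEquiv.symm
          * (Γ q)ᵀ
      = Sig q * (Sig q)ᵀ) :
    ∀ x : (Fin n → ℝ) × (Fin n → ℝ) × (Fin m → ℝ),
      -- ⟨M⁻¹p, ∇_q ρ⟩
      (∑ i, M⁻¹.mulVec x.2.1 i * fderiv ℝ (gleDensity β U M Q) x (eQ n m i))
      -- div_p [ (−∇U(q) − Γ₁₁(q)M⁻¹p − Γ₁₂(q)s) ρ ]
      + (∑ i, fderiv ℝ
          (fun y => (-(fderiv ℝ U y.1 (Pi.single i 1))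
            - (Γ11 y.1).mulVec (M⁻¹.mulVec y.2.1) i
            - (Γ12 y.1).mulVec y.2.2 i) * gleDensity β U M Q y) x (eP n m i))
      -- div_s [ (−Γ₂₁(q)M⁻¹p − Γ₂₂(q)s) ρ ]
      + (∑ j, fderiv ℝ
          (fun y => (-((Γ21 y.1).mulVec (M⁻¹.mulVec y.2.1) j)
            - (Γ22 y.1).mulVec y.2.2 j) * gleDensity β U M Q y) x (eS n m j))
      = (1 / (2 * β)) * ∑ i, ∑ j, (Sig x.1 * (Sig x.1)ᵀ) i j
          * fderiv ℝ (fun y => fderiv ℝ (gleDensity β U M Q) y (eZ n m j)) x (eZ n m i) :=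
  stmt1_general β hβ M hM U hU Γ Sig hΓ Γ11 Γ12 Γ21 Γ22 hblocks Q hQ hFDR
end

section
/- Let n, m be positive integers, let F : ℝⁿ → ℝⁿ be continuous, let Γ ∈ ℝ^{(n+m)×(n+m)} have blocks Γ₁₁ ∈ ℝ^{n×n}, Γ₁₂ ∈ ℝ^{n×m}, Γ₂₁ ∈ ℝ^{m×n}, Γ₂₂ ∈ ℝ^{m×m}, and let Σ ∈ ℝ^{(n+m)×(n+m)} be invertible with Σ₁ ∈ ℝ^{n×(n+m)} its top n rows and Σ₂ ∈ ℝ^{m×(n+m)} its bottom m rows. Then for every T > 0 and every pair of points (q⁻,p⁻,s⁻), (q⁺,p⁺,s⁺) ∈ ℝⁿ×ℝⁿ×ℝᵐ there exist a continuous control u : [0,T] → ℝ^{n+m} and continuously differentiable functions q : [0,T] → ℝⁿ, p : [0,T] → ℝⁿ, s : [0,T] → ℝᵐ such that for all t ∈ [0,T]: q′(t) = p(t), p′(t) = F(q(t)) − Γ₁₁·p(t) − Γ₁₂·s(t) + Σ₁·u(t), s′(t) = −Γ₂₁·p(t) − Γ₂₂·s(t) + Σ₂·u(t), with boundary conditions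 (q(0),p(0),s(0)) = (q⁻,p⁻,s⁻) and (q(T),p(T),s(T)) = (q⁺,p⁺,s⁺). -/
/-!
Because `Σ` is invertible, the control can impose any forcing on the `(p, s)` equations. So take
cubic Hermite interpolants `q` (with `q' = p` matching the prescribed momenta at both ends) and
`s`, and solve the two equations for `Σ u`: the control is `Σ⁻¹` applied to the required
derivatives `(p', s')` minus the drift.
-/

open Matrix Set

section Hermite

variable {E : Type*} [NormedAddCommGroup E] [NormedSpace ℝ E]

def cubicCurve (a₀ a₁ a₂ a₃ : E) (t : ℝ) : E := a₀ + t • a₁ + t ^ 2 • a₂ + t ^ 3 • a₃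

theorem hasDerivAt_cubicCurve (a₀ a₁ a₂ a₃ : E) (t : ℝ) :
    HasDerivAt (cubicCurve a₀ a₁ a₂ a₃)
      (cubicCurve a₁ ((2 : ℝ) • a₂) ((3 : ℝ) • a₃) 0 t) t := by
  have h := ((((hasDerivAt_id t).smul_const a₁).const_add a₀).add
    ((hasDerivAt_pow 2 t).smul_const a₂)).add ((hasDerivAt_pow 3 t).smul_const a₃)
  refine h.congr_deriv ?_
  simp only [cubicCurve, smul_zero, add_zero, smul_smul]
  push_cast
  module

theorem exists_hermite_interpolation {T : ℝ} (hT : T ≠ 0) (x₀ v₀ x₁ v₁ : E) :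
    ∃ x v a : ℝ → E, Continuous a ∧ (∀ t, HasDerivAt x (v t) t) ∧
      (∀ t, HasDerivAt v (a t) t) ∧ x 0 = x₀ ∧ v 0 = v₀ ∧ x T = x₁ ∧ v T = v₁ := by
  -- `a₂, a₃` solve the linear system `x T = x₁`, `v T = v₁` for a cubic with `x 0 = x₀`, `v 0 = v₀`.
  set A := x₁ - x₀ - T • v₀
  set B := v₁ - v₀
  set a₂ := (T ^ 2)⁻¹ • ((3 : ℝ) • A - T • B)
  set a₃ := (T ^ 3)⁻¹ • (T • B - (2 : ℝ) • A)
  refine ⟨cubicCurve x₀ v₀ a₂ a₃, cubicCurve v₀ ((2 : ℝ) • a₂) ((3 : ℝ) • a₃) 0,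
    cubicCurve ((2 : ℝ) • a₂) ((6 : ℝ) • a₃) 0 0, by unfold cubicCurve; fun_prop,
    hasDerivAt_cubicCurve _ _ _ _, fun t => ?_, by simp [cubicCurve], by simp [cubicCurve], ?_, ?_⟩
  · refine (hasDerivAt_cubicCurve v₀ ((2 : ℝ) • a₂) ((3 : ℝ) • a₃) 0 t).congr_deriv ?_
    simp only [cubicCurve, smul_zero, smul_smul]
    module
  · simp only [cubicCurve, a₂, a₃, A, B, smul_smul]
    match_scalars <;> field_simp <;> ring
  · simp only [cubicCurve, a₂, a₃, A, B, smul_smul]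
    match_scalars <;> field_simp <;> ring

end Hermite

section BlockRows

variable {α : Type*} [CommRing α] {n m : ℕ} {M : Matrix (Fin (n + m)) (Fin (n + m)) α}

theorem submatrix_castAdd_mulVec_inv_mulVec_append (hM : IsUnit M.det)
    (x : Fin n → α) (y : Fin m → α) :
    M.submatrix (Fin.castAdd m) id *ᵥ (M⁻¹ *ᵥ Fin.append x y) = x := by
  change (M *ᵥ (M⁻¹ *ᵥ Fin.append x y)) ∘ Fin.castAdd m = x
  rw [mulVec_mulVec, mul_nonsing_inv M hM, one_mulVec]
  exact funext (Fin.append_left x y)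

theorem submatrix_natAdd_mulVec_inv_mulVec_append (hM : IsUnit M.det)
    (x : Fin n → α) (y : Fin m → α) :
    M.submatrix (Fin.natAdd n) id *ᵥ (M⁻¹ *ᵥ Fin.append x y) = y := by
  change (M *ᵥ (M⁻¹ *ᵥ Fin.append x y)) ∘ Fin.natAdd n = y
  rw [mulVec_mulVec, mul_nonsing_inv M hM, one_mulVec]
  exact funext (Fin.append_right x y)

end BlockRows

theorem stmt8_general {n m : ℕ}
    (F : (Fin n → ℝ) → (Fin n → ℝ)) (hF : Continuous F)
    (Γ11 : Matrix (Fin n) (Fin n) ℝ) (Γ12 : Matrix (Fin n) (Fin m) ℝ)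
    (Γ21 : Matrix (Fin m) (Fin n) ℝ) (Γ22 : Matrix (Fin m) (Fin m) ℝ)
    (Sig : Matrix (Fin (n + m)) (Fin (n + m)) ℝ) (hSig : IsUnit Sig.det) :
    ∀ T : ℝ, 0 < T →
    ∀ (qm pm : Fin n → ℝ) (sm : Fin m → ℝ) (qp pp : Fin n → ℝ) (sp : Fin m → ℝ),
    ∃ (u : ℝ → (Fin (n + m) → ℝ)) (q p : ℝ → (Fin n → ℝ)) (s : ℝ → (Fin m → ℝ)),
      ContinuousOn u (Icc 0 T) ∧
      (∀ t ∈ Icc (0 : ℝ) T, HasDerivAt q (p t) t) ∧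
      (∀ t ∈ Icc (0 : ℝ) T, HasDerivAt p
        (F (q t) - Γ11.mulVec (p t) - Γ12.mulVec (s t)
          + (Sig.submatrix (Fin.castAdd m) id).mulVec (u t)) t) ∧
      (∀ t ∈ Icc (0 : ℝ) T, HasDerivAt s
        (-Γ21.mulVec (p t) - Γ22.mulVec (s t)
          + (Sig.submatrix (Fin.natAdd n) id).mulVec (u t)) t) ∧
      q 0 = qm ∧ p 0 = pm ∧ s 0 = sm ∧ q T = qp ∧ p T = pp ∧ s T = sp := by
  intro T hT qm pm sm qp pp sp
  obtain ⟨q, p, a, ha, hq, hp, hq0, hp0, hqT, hpT⟩ :=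
    exists_hermite_interpolation hT.ne' qm pm qp pp
  obtain ⟨s, ds, _, -, hs, hds, hs0, -, hsT, -⟩ :=
    exists_hermite_interpolation hT.ne' sm 0 sp 0
  have hq_cont : Continuous q := Differentiable.continuous fun t => (hq t).differentiableAt
  have hp_cont : Continuous p := Differentiable.continuous fun t => (hp t).differentiableAt
  have hs_cont : Continuous s := Differentiable.continuous fun t => (hs t).differentiableAt
  have hds_cont : Continuous ds := Differentiable.continuous fun t => (hds t).differentiableAt
  let driftP t := F (q t) - Γ11.mulVec (p t) - Γ12.mulVec (s t)
  let driftS t := -Γ21.mulVec (p t) - Γ22.mulVec (s t)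
  refine ⟨fun t => Sig⁻¹ *ᵥ Fin.append (a t - driftP t) (ds t - driftS t), q, p, s,
    Continuous.continuousOn ?_, fun t _ => hq t, fun t _ => ?_, fun t _ => ?_,
    hq0, hp0, hs0, hqT, hpT, hsT⟩
  · fun_prop
  · rw [submatrix_castAdd_mulVec_inv_mulVec_append hSig, add_sub_cancel]
    exact hp t
  · rw [submatrix_natAdd_mulVec_inv_mulVec_append hSig, add_sub_cancel]
    exact hs t

/-- Exact controllability of the deterministic control system associated with the
extended-variable quasi-Markovian GLE with invertible noise matrix `Σ`. -/
theorem stmt8 {n m : ℕ} (hn : 0 < n) (hm : 0 < m)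
    (F : (Fin n → ℝ) → (Fin n → ℝ)) (hF : Continuous F)
    (Γ11 : Matrix (Fin n) (Fin n) ℝ) (Γ12 : Matrix (Fin n) (Fin m) ℝ)
    (Γ21 : Matrix (Fin m) (Fin n) ℝ) (Γ22 : Matrix (Fin m) (Fin m) ℝ)
    (Sig : Matrix (Fin (n + m)) (Fin (n + m)) ℝ) (hSig : IsUnit Sig.det) :
    ∀ T : ℝ, 0 < T →
    ∀ (qm pm : Fin n → ℝ) (sm : Fin m → ℝ) (qp pp : Fin n → ℝ) (sp : Fin m → ℝ),
    ∃ (u : ℝ → (Fin (n + m) → ℝ)) (q p : ℝ → (Fin n → ℝ)) (s : ℝ → (Fin m → ℝ)),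
      ContinuousOn u (Icc 0 T) ∧
      (∀ t ∈ Icc (0 : ℝ) T, HasDerivAt q (p t) t) ∧
      (∀ t ∈ Icc (0 : ℝ) T, HasDerivAt p
        (F (q t) - Γ11.mulVec (p t) - Γ12.mulVec (s t)
          + (Sig.submatrix (Fin.castAdd m) id).mulVec (u t)) t) ∧
      (∀ t ∈ Icc (0 : ℝ) T, HasDerivAt s
        (-Γ21.mulVec (p t) - Γ22.mulVec (s t)
          + (Sig.submatrix (Fin.natAdd n) id).mulVec (u t)) t) ∧
      q 0 = qm ∧ p 0 = pm ∧ s 0 = sm ∧ q T = qp ∧ p T = pp ∧ s T = sp :=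
  stmt8_general F hF Γ11 Γ12 Γ21 Γ22 Sig hSig
end

section
/- For q ∈ ℝ let γ(q) = 2 + cos(2πq), let Γ(q) be the 2×2 real matrix [[0, −γ(q)],[γ(q), 1]], and let C be the 2×2 real matrix [[19/18, −1/6],[−1/6, 1]]. Then C is symmetric positive definite, and for every q ∈ ℝ the symmetric matrix Γ(q)·C + C·Γ(q)ᵀ is positive definite. -/
open Matrix

/- For `γ = 2 + cos (2πq) ∈ [1, 3]`, the matrix `Γ(q) C + C Γ(q)ᵀ` equals
`!![γ/3, (γ - 3)/18; (γ - 3)/18, 2 - γ/3]`. Its corner entry is positive and its determinant is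
at least `1/3 - 1/81` on `[1, 3]`, so the 2×2 criterion (positive corner entry and positive
determinant) applies, as it does to `C` itself. -/

theorem Matrix.posDef_fin_two_of_pos_of_det_pos {a b c : ℝ} (ha : 0 < a)
    (hdet : 0 < a * c - b * b) :
    (!![a, b; b, c] : Matrix (Fin 2) (Fin 2) ℝ).PosDef := by
  refine posDef_iff_dotProduct_mulVec.mpr ⟨?_, fun x hx => ?_⟩
  · ext i j
    fin_cases i <;> fin_cases j <;> rfl
  simp only [dotProduct, mulVec, Fin.sum_univ_two, star_trivial, of_apply, cons_val',
    cons_val_zero, cons_val_one, cons_val_fin_one]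
  have hsq : a * (x 0 * (a * x 0 + b * x 1) + x 1 * (b * x 0 + c * x 1))
      = (a * x 0 + b * x 1) ^ 2 + (a * c - b * b) * x 1 ^ 2 := by ring
  have hpos : 0 < (a * x 0 + b * x 1) ^ 2 + (a * c - b * b) * x 1 ^ 2 := by
    rcases eq_or_ne (x 1) 0 with h1 | h1
    · have h0 : x 0 ≠ 0 := fun h0 => hx (funext fun i => by fin_cases i <;> assumption)
      simp only [h1, mul_zero, add_zero, zero_pow two_ne_zero]
      positivity
    · positivity
  exact pos_of_mul_pos_right (hsq ▸ hpos) ha.le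

theorem friction_mul_add_mul_transpose_fin_two (g a b c : ℝ) :
    (!![0, -g; g, 1] : Matrix (Fin 2) (Fin 2) ℝ) * !![a, b; b, c]
        + !![a, b; b, c] * (!![0, -g; g, 1] : Matrix (Fin 2) (Fin 2) ℝ)ᵀ
      = !![-2 * g * b, g * (a - c) + b; g * (a - c) + b, 2 * (g * b + c)] := by
  rw [eta_fin_two (!![0, -g; g, 1]ᵀ)]
  simp only [transpose_apply, of_apply, cons_val', cons_val_zero, cons_val_one, cons_val_fin_one,
    mul_fin_two]
  ext i j
  fin_cases i <;> fin_cases j <;> simp <;> ring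

/-- For the concrete one-dimensional GLE example with `γ(q) = 2 + cos(2πq)`,
`Γ(q) = [[0, −γ(q)],[γ(q), 1]]` and `C = [[19/18, −1/6],[−1/6, 1]]`, the matrix `C` is
positive definite and `Γ(q)C + CΓ(q)ᵀ` is positive definite for every `q`. -/
theorem stmt10 :
    (!![19 / 18, -(1 / 6); -(1 / 6), 1] : Matrix (Fin 2) (Fin 2) ℝ).PosDef ∧
    ∀ q : ℝ,
      ((!![0, -(2 + Real.cos (2 * Real.pi * q)); 2 + Real.cos (2 * Real.pi * q), 1] :
          Matrix (Fin 2) (Fin 2) ℝ)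
        * !![19 / 18, -(1 / 6); -(1 / 6), 1]
        + (!![19 / 18, -(1 / 6); -(1 / 6), 1] : Matrix (Fin 2) (Fin 2) ℝ)
        * (!![0, -(2 + Real.cos (2 * Real.pi * q)); 2 + Real.cos (2 * Real.pi * q), 1])ᵀ).PosDef := by
  refine ⟨posDef_fin_two_of_pos_of_det_pos (by norm_num) (by norm_num), fun q => ?_⟩
  set γ := 2 + Real.cos (2 * Real.pi * q)
  have hγ_ge : 1 ≤ γ := by linarith [Real.neg_one_le_cos (2 * Real.pi * q)]
  have hγ_le : γ ≤ 3 := by linarith [Real.cos_le_one (2 * Real.pi * q)]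
  rw [friction_mul_add_mul_transpose_fin_two]
  exact posDef_fin_two_of_pos_of_det_pos (by linarith) (by nlinarith)
end

section
/- Let n ≤ m be positive integers, let Q ∈ ℝ^{m×m} be symmetric positive definite, let G ∈ ℝ^{m×n} be an arbitrary matrix, and let A ≥ 0 be a real number. Then there exists B₀ > 0 such that for every B ≥ B₀ the symmetric block matrix [[Iₙ, Iₙ, 0],[Iₙ, B·Iₙ, A·Gᵀ],[0, A·G, B·Q⁻¹]] ∈ ℝ^{(2n+m)×(2n+m)} is positive definite. -/
/-!
Two Schur complements. Eliminating the positive definite block `B Q⁻¹`, whose inverse is `B⁻¹ Q`,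
leaves `[[I, I], [I, B I - (A² / B) GᵀQG]]`; eliminating the identity block then leaves
`(B - 1) I - (A² / B) GᵀQG`. Since `xᵀ P x ≤ (∑ᵢⱼ |Pᵢⱼ|) ‖x‖²`, this is positive definite as soon as
`B ≥ A² ∑ᵢⱼ |(GᵀQG)ᵢⱼ| + 2`.
-/

open Matrix
open scoped ComplexOrder

namespace Matrix

theorem fromBlocks_sub_fromRows_zero_mul_mul_fromCols_zero {R l n k : Type*} [Ring R] [Fintype k]
    (T₁₁ : Matrix l l R) (T₁₂ : Matrix l n R) (T₂₁ : Matrix n l R) (T₂₂ : Matrix n n R)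
    (C : Matrix n k R) (M : Matrix k k R) (C' : Matrix k n R) :
    fromBlocks T₁₁ T₁₂ T₂₁ T₂₂ - fromRows (0 : Matrix l k R) C * M * fromCols 0 C' =
      fromBlocks T₁₁ T₁₂ T₂₁ (T₂₂ - C * M * C') := by
  rw [fromRows_mul, fromRows_mul_fromCols, sub_eq_add_neg, fromBlocks_neg, fromBlocks_add]
  simp [sub_eq_add_neg]

theorem inv_smul_nonsing_inv {K n : Type*} [Field K] [Fintype n] [DecidableEq n]
    {M : Matrix n n K} (hM : IsUnit M.det) {c : K} (hc : c ≠ 0) : (c • M⁻¹)⁻¹ = c⁻¹ • M := by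
  let _ := invertibleOfNonzero hc
  rw [Matrix.inv_smul (A := M⁻¹) c (isUnit_nonsing_inv_det M hM), invOf_eq_inv,
    nonsing_inv_nonsing_inv M hM]

section SchurComplement

variable {𝕜 m n : Type*} [RCLike 𝕜] [Fintype m] [Fintype n] [DecidableEq m] [DecidableEq n]

/- The Schur complement criterion gives semidefiniteness, and
`det = det D * det (A - B D⁻¹ Bᴴ) ≠ 0` upgrades it to definiteness. -/
theorem PosDef.posDef_fromBlocks₂₂ {D : Matrix n n 𝕜} (hD : D.PosDef) (A : Matrix m m 𝕜)
    (B : Matrix m n 𝕜) (hS : (A - B * D⁻¹ * Bᴴ).PosDef) : (fromBlocks A B Bᴴ D).PosDef := by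
  let _ := hD.isUnit.invertible
  refine (((PosDef.fromBlocks₂₂ A B hD).2 hS.posSemidef).posDef_iff_det_ne_zero).2 ?_
  rw [det_fromBlocks₂₂, invOf_eq_nonsing_inv]
  exact mul_ne_zero hD.det_pos.ne' hS.det_pos.ne'

theorem PosDef.posDef_fromBlocks₁₁ {A : Matrix m m 𝕜} (hA : A.PosDef) (B : Matrix m n 𝕜)
    (D : Matrix n n 𝕜) (hS : (D - Bᴴ * A⁻¹ * B).PosDef) : (fromBlocks A B Bᴴ D).PosDef := by
  let _ := hA.isUnit.invertible
  refine (((PosDef.fromBlocks₁₁ B D hA).2 hS.posSemidef).posDef_iff_det_ne_zero).2 ?_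
  rw [det_fromBlocks₁₁, invOf_eq_nonsing_inv]
  exact mul_ne_zero hA.det_pos.ne' hS.det_pos.ne'

theorem PosDef.fromBlocks_one_one_one {S : Matrix n n 𝕜} (hS : (S - 1).PosDef) :
    (fromBlocks (1 : Matrix n n 𝕜) 1 1 S).PosDef := by
  simpa using PosDef.one.posDef_fromBlocks₁₁ (1 : Matrix n n 𝕜) S (by simpa using hS)

end SchurComplement

section EntrywiseBound

variable {p : Type*} [Fintype p]

theorem dotProduct_mulVec_le_sum_abs_mul (P : Matrix p p ℝ) (x : p → ℝ) :
    x ⬝ᵥ P *ᵥ x ≤ (∑ i, ∑ j, |P i j|) * (x ⬝ᵥ x) := by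
  have hsq (i : p) : x i * x i ≤ x ⬝ᵥ x :=
    Finset.single_le_sum (f := fun i => x i * x i) (fun j _ => mul_self_nonneg (x j))
      (Finset.mem_univ i)
  have hprod (i j : p) : |x i * x j| ≤ x ⬝ᵥ x := by
    rw [abs_mul]
    nlinarith [abs_mul_abs_self (x i), abs_mul_abs_self (x j), sq_nonneg (|x i| - |x j|),
      hsq i, hsq j]
  have hexpand : x ⬝ᵥ P *ᵥ x = ∑ i, ∑ j, P i j * (x i * x j) := by
    simp only [dotProduct, mulVec, Finset.mul_sum]
    exact Finset.sum_congr rfl fun i _ => Finset.sum_congr rfl fun j _ => by ring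
  rw [hexpand, Finset.sum_mul]
  refine Finset.sum_le_sum fun i _ => ?_
  rw [Finset.sum_mul]
  refine Finset.sum_le_sum fun j _ => ?_
  calc P i j * (x i * x j) ≤ |P i j| * |x i * x j| := (le_abs_self _).trans (abs_mul _ _).le
    _ ≤ |P i j| * (x ⬝ᵥ x) := mul_le_mul_of_nonneg_left (hprod i j) (abs_nonneg _)

theorem posDef_smul_one_sub_smul [DecidableEq p] {P : Matrix p p ℝ} (hP : P.IsHermitian)
    {c t : ℝ} (hc : 0 ≤ c) (ht : c * ∑ i, ∑ j, |P i j| < t) :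
    (t • (1 : Matrix p p ℝ) - c • P).PosDef := by
  refine posDef_iff_dotProduct_mulVec.2 ⟨?_, fun x hx => ?_⟩
  · exact (isHermitian_one.smul (IsSelfAdjoint.all t)).sub (hP.smul (IsSelfAdjoint.all c))
  have hx : 0 < x ⬝ᵥ x := by simpa using dotProduct_star_self_pos_iff.2 hx
  have hPx := dotProduct_mulVec_le_sum_abs_mul P x
  simp only [star_trivial, sub_mulVec, smul_mulVec, one_mulVec, dotProduct_sub, dotProduct_smul,
    smul_eq_mul]
  nlinarith [mul_le_mul_of_nonneg_left hPx hc]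

end EntrywiseBound

end Matrix

theorem stmt11_general {n m : ℕ}
    (Q : Matrix (Fin m) (Fin m) ℝ) (hQ : Q.PosDef)
    (G : Matrix (Fin m) (Fin n) ℝ) (A : ℝ) :
    ∃ B₀ : ℝ, 0 < B₀ ∧ ∀ B : ℝ, B₀ ≤ B →
      (Matrix.fromBlocks
        (Matrix.fromBlocks (1 : Matrix (Fin n) (Fin n) ℝ) (1 : Matrix (Fin n) (Fin n) ℝ)
          (1 : Matrix (Fin n) (Fin n) ℝ) (B • (1 : Matrix (Fin n) (Fin n) ℝ)))
        (Matrix.fromRows (0 : Matrix (Fin n) (Fin m) ℝ) (A • Gᵀ))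
        (Matrix.fromCols (0 : Matrix (Fin m) (Fin n) ℝ) (A • G))
        (B • Q⁻¹)).PosDef := by
  set P := Gᵀ * Q * G
  set K := ∑ i, ∑ j, |P i j|
  have hK : 0 ≤ A ^ 2 * K := by positivity
  refine ⟨A ^ 2 * K + 2, by positivity, fun B hB₀ => ?_⟩
  have hB : 0 < B := by linarith
  have hE : (fromRows (0 : Matrix (Fin n) (Fin m) ℝ) (A • Gᵀ))ᴴ = fromCols 0 (A • G) := by
    simp [transpose_fromRows]
  rw [← hE]
  refine (hQ.inv.smul hB).posDef_fromBlocks₂₂ _ _ ?_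
  rw [hE, inv_smul_nonsing_inv hQ.det_pos.ne'.isUnit hB.ne',
    fromBlocks_sub_fromRows_zero_mul_mul_fromCols_zero]
  refine PosDef.fromBlocks_one_one_one ?_
  have hSchur : B • 1 - A • Gᵀ * B⁻¹ • Q * A • G - 1 = (B - 1) • 1 - (A ^ 2 / B) • P := by
    simp only [Matrix.smul_mul, Matrix.mul_smul, smul_smul]
    module
  rw [hSchur]
  have hP : P.IsHermitian := by simpa using isHermitian_conjTranspose_mul_mul G hQ.1
  refine posDef_smul_one_sub_smul hP (by positivity) ?_
  have hAK : A ^ 2 / B * K ≤ A ^ 2 * K := by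
    rw [div_mul_eq_mul_div]
    exact div_le_self hK (by linarith)
  linarith

/-- Positivity of the quadratic part `Ĉ_{A,B}` of the GLE Lyapunov function: for any `A ≥ 0`
there is `B₀ > 0` such that for all `B ≥ B₀` the block matrix
`[[Iₙ, Iₙ, 0],[Iₙ, B·Iₙ, A·Gᵀ],[0, A·G, B·Q⁻¹]]` is positive definite. -/
theorem stmt11 {n m : ℕ} (hn : 0 < n) (hm : 0 < m) (hnm : n ≤ m)
    (Q : Matrix (Fin m) (Fin m) ℝ) (hQ : Q.PosDef)
    (G : Matrix (Fin m) (Fin n) ℝ) (A : ℝ) (hA : 0 ≤ A) :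
    ∃ B₀ : ℝ, 0 < B₀ ∧ ∀ B : ℝ, B₀ ≤ B →
      (Matrix.fromBlocks
        (Matrix.fromBlocks (1 : Matrix (Fin n) (Fin n) ℝ) (1 : Matrix (Fin n) (Fin n) ℝ)
          (1 : Matrix (Fin n) (Fin n) ℝ) (B • (1 : Matrix (Fin n) (Fin n) ℝ)))
        (Matrix.fromRows (0 : Matrix (Fin n) (Fin m) ℝ) (A • Gᵀ))
        (Matrix.fromCols (0 : Matrix (Fin m) (Fin n) ℝ) (A • G))
        (B • Q⁻¹)).PosDef :=
  stmt11_general Q hQ G A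
end

section
/- Let n, k be positive integers, E > 0, and let J, M ∈ ℝ^{k×k} and X ∈ ℝ^{k×n} be matrices such that M + Mᵀ is positive definite. Then there exists B₀ > 0 such that for every B ≥ B₀ the symmetric matrix R + Rᵀ is positive definite, where R is the block matrix [[E·Iₙ, 0],[X, J + B·M]] ∈ ℝ^{(n+k)×(n+k)}. -/
/-!
Over `ℝ`, `R + Rᵀ = [[2E·I, Xᵀ], [X, S + B(M + Mᵀ)]]` with `S = J + Jᵀ - X (2E·I)⁻¹ Xᵀ` symmetric,
and since the upper-left block is positive definite, `R + Rᵀ` is positive definite iff its Schur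
complement `S + B(M + Mᵀ)` is. The spectra being compact, in the Loewner order `S ≥ c·I` for some
`c` and `M + Mᵀ ≥ r·I` for some `r > 0`, so `S + B(M + Mᵀ) ≥ (c + Br)·I` is positive definite as
soon as `c + Br > 0`.
-/

open Filter

section CFC

variable {A : Type*} [TopologicalSpace A] [Ring A] [StarRing A] [PartialOrder A]
  [StarOrderedRing A] [Algebra ℝ A] [NonnegSpectrumClass ℝ A]
  [ContinuousFunctionalCalculus ℝ A IsSelfAdjoint]

theorem IsSelfAdjoint.isStrictlyPositive_of_algebraMap_le {a : A} (ha : IsSelfAdjoint a) {r : ℝ}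
    (hr : 0 < r) (hra : algebraMap ℝ A r ≤ a) : IsStrictlyPositive a :=
  (StarOrderedRing.isStrictlyPositive_iff_spectrum_pos a ha).2 fun _ hx ↦
    hr.trans_le ((algebraMap_le_iff_le_spectrum ha).1 hra _ hx)

theorem IsSelfAdjoint.exists_algebraMap_le {a : A} (ha : IsSelfAdjoint a) :
    ∃ c : ℝ, algebraMap ℝ A c ≤ a := by
  obtain ⟨c, hc⟩ := (ContinuousFunctionalCalculus.isCompact_spectrum (R := ℝ) a).bddBelow
  exact ⟨c, (algebraMap_le_iff_le_spectrum ha).2 hc⟩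

theorem IsStrictlyPositive.eventually_add_smul [StarModule ℝ A] [PosSMulMono ℝ A] {p s : A}
    (hp : IsStrictlyPositive p) (hs : IsSelfAdjoint s) :
    ∀ᶠ t : ℝ in atTop, IsStrictlyPositive (s + t • p) := by
  rcases subsingleton_or_nontrivial A with hA | hA
  · exact .of_forall fun _ ↦ .of_subsingleton
  obtain ⟨r, hr, hrp⟩ := (CFC.exists_pos_algebraMap_le_iff hp.isSelfAdjoint).2
    fun x hx ↦ hp.spectrum_pos hx
  obtain ⟨c, hcs⟩ := hs.exists_algebraMap_le
  filter_upwards [eventually_ge_atTop 0, eventually_ge_atTop ((1 - c) / r)] with t ht₀ ht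
  have hgap : 0 < c + t * r := by
    rw [div_le_iff₀ hr] at ht
    linarith
  refine (hs.add ((IsSelfAdjoint.all t).smul hp.isSelfAdjoint)).isStrictlyPositive_of_algebraMap_le
    hgap ?_
  calc algebraMap ℝ A (c + t * r) = algebraMap ℝ A c + t • algebraMap ℝ A r := by
        rw [map_add, map_mul, ← Algebra.smul_def]
    _ ≤ s + t • p := add_le_add hcs (smul_le_smul_of_nonneg_left hrp ht₀)

end CFC

namespace Matrix

open scoped ComplexOrder

variable {𝕜 m n : Type*} [RCLike 𝕜] [Fintype m] [Fintype n] [DecidableEq m] [DecidableEq n]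

theorem PosDef.fromBlocks₁₁_posDef_iff {A : Matrix m m 𝕜} (B : Matrix m n 𝕜) (D : Matrix n n 𝕜)
    (hA : A.PosDef) : (fromBlocks A B Bᴴ D).PosDef ↔ (D - Bᴴ * A⁻¹ * B).PosDef := by
  let _ : Invertible A := hA.isUnit.invertible
  -- Mathlib's Schur criterion is for semidefiniteness; a semidefinite matrix is definite iff its
  -- determinant is nonzero, and the determinant factors through the Schur complement.
  have hdet : (fromBlocks A B Bᴴ D).det = A.det * (D - Bᴴ * A⁻¹ * B).det := by
    rw [det_fromBlocks₁₁, invOf_eq_nonsing_inv]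
  constructor
  · intro h
    rw [((hA.fromBlocks₁₁ B D).1 h.posSemidef).posDef_iff_det_ne_zero]
    exact right_ne_zero_of_mul (hdet ▸ h.det_pos.ne')
  · intro h
    rw [((hA.fromBlocks₁₁ B D).2 h.posSemidef).posDef_iff_det_ne_zero, hdet]
    exact mul_ne_zero hA.det_pos.ne' h.det_pos.ne'

open scoped MatrixOrder in
theorem PosDef.eventually_add_smul {P S : Matrix n n 𝕜} (hP : P.PosDef) (hS : S.IsHermitian) :
    ∀ᶠ t : ℝ in atTop, (S + t • P).PosDef := by
  simpa only [isStrictlyPositive_iff_posDef] using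
    hP.isStrictlyPositive.eventually_add_smul hS.isSelfAdjoint

end Matrix

open Matrix

theorem stmt12_general {n k : ℕ} (E : ℝ) (hE : 0 < E)
    (J M : Matrix (Fin k) (Fin k) ℝ) (X : Matrix (Fin k) (Fin n) ℝ)
    (hM : (M + Mᵀ).PosDef) :
    ∃ B₀ : ℝ, 0 < B₀ ∧ ∀ B : ℝ, B₀ ≤ B →
      ((Matrix.fromBlocks (E • (1 : Matrix (Fin n) (Fin n) ℝ)) (0 : Matrix (Fin n) (Fin k) ℝ)
          X (J + B • M))
        + (Matrix.fromBlocks (E • (1 : Matrix (Fin n) (Fin n) ℝ)) (0 : Matrix (Fin n) (Fin k) ℝ)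
          X (J + B • M))ᵀ).PosDef := by
  set A : Matrix (Fin n) (Fin n) ℝ := (2 * E) • 1
  have hA : A.PosDef := PosDef.one.smul (by positivity)
  set S := J + Jᵀ - Xᵀᴴ * A⁻¹ * Xᵀ
  have hS : S.IsHermitian := (isHermitian_add_transpose_self J).sub
    (isHermitian_conjTranspose_mul_mul _ hA.isHermitian.inv)
  obtain ⟨B₀, hB₀⟩ := eventually_atTop.1 (hM.eventually_add_smul hS)
  refine ⟨max B₀ 1, by positivity, fun B hB ↦ ?_⟩
  have hblocks : fromBlocks (E • 1 + (E • 1)ᵀ) (0 + Xᵀ) (X + 0ᵀ) (J + B • M + (J + B • M)ᵀ)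
      = fromBlocks A Xᵀ Xᵀᴴ (J + Jᵀ + B • (M + Mᵀ)) := by
    congr 1
    · simp [A, two_mul, add_smul]
    · exact zero_add _
    · simp
    · rw [transpose_add, transpose_smul, smul_add]
      abel
  rw [fromBlocks_transpose, fromBlocks_add, hblocks, hA.fromBlocks₁₁_posDef_iff]
  convert hB₀ B (le_of_max_le_left hB) using 1
  simp only [S]
  abel

/-- If `M + Mᵀ` is positive definite, then for `B` large enough the symmetric part of the
block matrix `R = [[E·Iₙ, 0],[X, J + B·M]]` is positive definite. -/
theorem stmt12 {n k : ℕ} (hn : 0 < n) (hk : 0 < k) (E : ℝ) (hE : 0 < E)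
    (J M : Matrix (Fin k) (Fin k) ℝ) (X : Matrix (Fin k) (Fin n) ℝ)
    (hM : (M + Mᵀ).PosDef) :
    ∃ B₀ : ℝ, 0 < B₀ ∧ ∀ B : ℝ, B₀ ≤ B →
      ((Matrix.fromBlocks (E • (1 : Matrix (Fin n) (Fin n) ℝ)) (0 : Matrix (Fin n) (Fin k) ℝ)
          X (J + B • M))
        + (Matrix.fromBlocks (E • (1 : Matrix (Fin n) (Fin n) ℝ)) (0 : Matrix (Fin n) (Fin k) ℝ)
          X (J + B • M))ᵀ).PosDef :=
  stmt12_general E hE J M X hM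
end
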